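/- Let ξ^1, ξ^2, … be i.i.d. random variables on a complete probability space (Ω, F, P), each uniformly distributed on [0,1]. Then there exists an F-measurable set E ⊂ Ω with P(E) = 1 such that for every ω ∈ E there exists ν̄(ω) ∈ ℕ with the property: for every ν ≥ ν̄(ω) there exists an integer k with 1 ≤ k ≤ ⌈2^{ν+1} log(ν+1)⌉ such that bit_k(ξ^i(ω)) = 1 for every i ∈ {1, …, ν}. -/

import Mathlib

open MeasureTheory ProbabilityTheory

/-- The `k`-th binary digit of `ξ`: `bit_k(ξ) = ⌊2^k ξ⌋ − 2⌊2^{k−1} ξ⌋`. -/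
noncomputable def bitk (k : ℕ) (ξ : ℝ) : ℤ :=
  ⌊(2 : ℝ) ^ k * ξ⌋ - 2 * ⌊(2 : ℝ) ^ (k - 1) * ξ⌋

lemma myfloor_div (x : ℝ) (n : ℕ) (hn : 0 < n) : ⌊x / (n : ℝ)⌋ = ⌊x⌋ / (n : ℤ) := by
  have hn' : (0:ℝ) < (n:ℝ) := by exact_mod_cast hn
  set q : ℤ := ⌊x⌋ / (n:ℤ) with hqdef
  have hq := Int.mul_ediv_add_emod ⌊x⌋ (n : ℤ)
  have hr0 : 0 ≤ ⌊x⌋ % (n:ℤ) := Int.emod_nonneg _ (by exact_mod_cast hn.ne')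
  have hrn : ⌊x⌋ % (n:ℤ) < (n:ℤ) := Int.emod_lt_of_pos _ (by exact_mod_cast hn)
  have hfl : (⌊x⌋ : ℝ) ≤ x := Int.floor_le x
  have hfu : x < ⌊x⌋ + 1 := Int.lt_floor_add_one x
  have hql : ((n:ℝ)) * (q:ℝ) ≤ (⌊x⌋ : ℝ) := by
    exact_mod_cast (by linarith : (n:ℤ) * q ≤ ⌊x⌋)
  have hqu : ((⌊x⌋:ℤ) : ℝ) + 1 ≤ ((n:ℝ)) * ((q:ℝ) + 1) := by
    exact_mod_cast (by nlinarith : (⌊x⌋:ℤ) + 1 ≤ (n:ℤ) * (q + 1))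
  rw [Int.floor_eq_iff]
  constructor
  · rw [le_div_iff₀ hn']; nlinarith
  · rw [div_lt_iff₀ hn']; nlinarith

lemma floor_pow_div (x : ℝ) (k K : ℕ) (hkK : k ≤ K) :
    ⌊(2:ℝ)^k * x⌋ = ⌊(2:ℝ)^K * x⌋ / (2^(K-k) : ℤ) := by
  have h1 : (2:ℝ)^k * x = ((2:ℝ)^K * x) / ((2^(K-k) : ℕ) : ℝ) := by
    have : (2:ℝ)^K = 2^k * 2^(K-k) := by
      rw [← pow_add]; congr 1; omega
    rw [this]; push_cast; field_simp
  rw [h1, myfloor_div _ _ (Nat.two_pow_pos _)]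
  push_cast
  rfl

lemma bitk_testBit (x : ℝ) (hx0 : 0 ≤ x) (k K : ℕ) (hk : 1 ≤ k) (hkK : k ≤ K) :
    bitk k x = 1 ↔ (⌊(2:ℝ)^K * x⌋).toNat.testBit (K - k) = true := by
  set m : ℤ := ⌊(2:ℝ)^K * x⌋ with hm
  have hm0 : 0 ≤ m := Int.floor_nonneg.mpr (by positivity)
  set M : ℕ := m.toNat with hMdef
  have hMm : (M : ℤ) = m := Int.toNat_of_nonneg hm0
  set j : ℕ := K - k with hj
  have h1 : ⌊(2:ℝ)^k * x⌋ = m / (2^j : ℤ) := floor_pow_div x k K hkK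
  have h2 : ⌊(2:ℝ)^(k-1) * x⌋ = m / (2^(j+1) : ℤ) := by
    have := floor_pow_div x (k-1) K (by omega)
    rw [this]; congr 2; omega
  have hdiv1 : m / (2^j : ℤ) = ((M / 2^j : ℕ) : ℤ) := by
    rw [← hMm]; push_cast; rfl
  have hdiv2 : m / (2^(j+1) : ℤ) = ((M / 2^j / 2 : ℕ) : ℤ) := by
    rw [← hMm, Nat.div_div_eq_div_mul, ← pow_succ]; push_cast; rfl
  rw [Nat.testBit_eq_decide_div_mod_eq]
  unfold bitk
  rw [h1, h2, hdiv1, hdiv2]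
  set a : ℕ := M / 2^j
  simp only [decide_eq_true_eq]
  omega

def bset (K m : ℕ) : Set ℝ := {x | ⌊(2:ℝ)^K * x⌋ = (m:ℤ)}

lemma bset_eq (K m : ℕ) :
    bset K m = Set.Ico ((m:ℝ)/2^K) (((m:ℝ)+1)/2^K) := by
  have h2 : (0:ℝ) < 2^K := by positivity
  ext x
  simp only [bset, Set.mem_setOf_eq, Set.mem_Ico, Int.floor_eq_iff, Int.cast_natCast]
  rw [div_le_iff₀ h2, lt_div_iff₀ h2]
  constructor <;> rintro ⟨a, b⟩ <;> constructor <;> nlinarith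

lemma bset_meas (K m : ℕ) : MeasurableSet (bset K m) := by
  rw [bset_eq]; exact measurableSet_Ico

lemma vol_bset (K m : ℕ) (hm : m < 2^K) :
    (volume.restrict (Set.Icc (0:ℝ) 1)) (bset K m) = ENNReal.ofReal (((2:ℝ)^K)⁻¹) := by
  have h2 : (0:ℝ) < 2^K := by positivity
  have hsub : bset K m ⊆ Set.Icc (0:ℝ) 1 := by
    rw [bset_eq]
    intro x hx
    have hm1 : ((m:ℝ)+1) ≤ 2^K := by exact_mod_cast Nat.succ_le_of_lt hm
    rcases hx with ⟨a, b⟩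
    constructor
    · have : (0:ℝ) ≤ (m:ℝ)/2^K := by positivity
      linarith
    · have : ((m:ℝ)+1)/2^K ≤ 1 := by
        rw [div_le_one h2]; exact hm1
      linarith
  rw [Measure.restrict_apply (bset_meas K m), Set.inter_eq_left.mpr hsub, bset_eq,
    Real.volume_Ico]
  congr 1
  field_simp
  ring

lemma card_target (ν K : ℕ) :
    Fintype.card {g : Fin K → Fin ν → Bool // ∀ j, ∃ i, g j i = false}
      = (2^ν - 1)^K := by
  rw [Fintype.card_congr (Equiv.subtypePiEquivPi (p := fun _ (v : Fin ν → Bool) => ∃ i, v i = false))]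
  rw [Fintype.card_pi, Finset.prod_const, Finset.card_univ, Fintype.card_fin]
  congr 1
  have h1 : ∀ v : Fin ν → Bool, (∃ i, v i = false) ↔ ¬ (v = fun _ => true) := by
    intro v
    simp [funext_iff]
  rw [Fintype.card_congr (Equiv.subtypeEquivRight h1)]
  rw [Fintype.card_subtype_compl, Fintype.card_subtype_eq, Fintype.card_fun]
  simp

lemma card_F (ν K : ℕ) :
    Fintype.card {f : Fin ν → Fin (2^K) // ∀ j < K, ∃ i, ((f i : ℕ).testBit j = false)}
      ≤ (2^ν - 1)^K := by
  rw [← card_target ν K]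
  apply Fintype.card_le_of_injective
    (f := fun f => ⟨fun j i => ((f.1 i : ℕ)).testBit j.1, fun j => f.2 j.1 j.2⟩)
  rintro ⟨f, hf⟩ ⟨g, hg⟩ h
  simp only [Subtype.mk.injEq] at h ⊢
  funext i
  have hbit : ∀ j : ℕ, ((f i : ℕ)).testBit j = ((g i : ℕ)).testBit j := by
    intro j
    by_cases hj : j < K
    · exact congrFun (congrFun h ⟨j, hj⟩) i
    · rw [Nat.testBit_eq_false_of_lt, Nat.testBit_eq_false_of_lt]
      · exact lt_of_lt_of_le (g i).2 (Nat.pow_le_pow_right (by norm_num) (by omega))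
      · exact lt_of_lt_of_le (f i).2 (Nat.pow_le_pow_right (by norm_num) (by omega))
  exact Fin.ext (Nat.eq_of_testBit_eq hbit)

lemma analytic (ν K : ℕ) (hν : 1 ≤ ν)
    (hK : (2:ℝ)^(ν+1) * Real.log ((ν:ℝ)+1) ≤ (K:ℝ)) :
    ((2^ν - 1 : ℕ):ℝ)^K * (((2:ℝ)^K)⁻¹)^ν ≤ (((ν:ℝ)+1)⁻¹)^2 := by
  set t : ℝ := (ν:ℝ)+1 with ht
  have ht1 : (1:ℝ) < t := by
    have : (1:ℝ) ≤ (ν:ℝ) := by exact_mod_cast hν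
    simp only [ht]; linarith
  have ht0 : (0:ℝ) < t := by linarith
  set L : ℝ := Real.log t with hL
  have hL0 : 0 ≤ L := Real.log_nonneg (by linarith)
  set u : ℝ := ((2:ℝ)^ν)⁻¹ with hu
  have hu0 : 0 < u := by positivity
  have hu1 : u ≤ 1 := by
    rw [hu, inv_le_one_iff₀]; right; exact one_le_pow₀ (by norm_num)
  have hcast : ((2^ν - 1 : ℕ):ℝ) = 2^ν - 1 := by
    push_cast [Nat.one_le_two_pow]; ring
  have hLHS : ((2^ν - 1 : ℕ):ℝ)^K * (((2:ℝ)^K)⁻¹)^ν = (1 - u)^K := by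
    rw [hcast, ← inv_pow, ← pow_mul, Nat.mul_comm, pow_mul, inv_pow (2:ℝ) ν, ← hu, ← mul_pow]
    congr 1
    rw [hu]
    field_simp
  rw [hLHS]
  have h1 : (1 - u)^K ≤ Real.exp (-u) ^ K := by
    apply pow_le_pow_left₀ (by linarith)
    linarith [Real.add_one_le_exp (-u)]
  have h2 : Real.exp (-u) ^ K = Real.exp (-u * K) := by
    rw [← Real.exp_nat_mul]; ring_nf
  have h3 : 2 * L ≤ u * K := by
    have hu2 : u * ((2:ℝ)^(ν+1) * L) = 2 * L := by
      rw [hu, pow_succ]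
      field_simp
    calc 2 * L = u * ((2:ℝ)^(ν+1) * L) := hu2.symm
      _ ≤ u * K := mul_le_mul_of_nonneg_left hK (le_of_lt hu0)
  have h4 : Real.exp (-u * K) ≤ Real.exp (-(2*L)) := by
    apply Real.exp_le_exp.mpr; linarith
  have h5 : Real.exp (-(2*L)) = (t⁻¹)^2 := by
    rw [show -(2*L) = -L + -L by ring, Real.exp_add, Real.exp_neg, hL, Real.exp_log ht0, sq]
  calc (1-u)^K ≤ Real.exp (-u) ^ K := h1
    _ = Real.exp (-u * K) := h2
    _ ≤ Real.exp (-(2*L)) := h4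
    _ = (t⁻¹)^2 := h5

theorem stmt_6
    {Ω : Type*} [MeasurableSpace Ω] (P : Measure Ω) [IsProbabilityMeasure P]
    (hPcomp : P.IsComplete)
    (ξ : ℕ → Ω → ℝ) (hmeas : ∀ i, Measurable (ξ i))
    (hindep : iIndepFun ξ P)
    (hunif : ∀ i, Measure.map (ξ i) P = volume.restrict (Set.Icc (0 : ℝ) 1)) :
    ∃ E : Set Ω, MeasurableSet E ∧ P E = 1 ∧
      ∀ ω ∈ E, ∃ N : ℕ, ∀ ν : ℕ, N ≤ ν →
        ∃ k : ℕ, 1 ≤ k ∧ (k : ℤ) ≤ ⌈(2 : ℝ) ^ (ν + 1) * Real.log (ν + 1)⌉ ∧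
          ∀ i : ℕ, i < ν → bitk k (ξ i ω) = 1 := by
  classical
  set Kf : ℕ → ℕ := fun ν => (⌈(2:ℝ)^(ν+1) * Real.log ((ν:ℝ)+1)⌉).toNat with hKf
  set A : ℕ → Set Ω := fun ν =>
    ⋂ k ∈ Set.Icc 1 (Kf ν), ⋃ i ∈ Set.Iio ν, {ω | bitk k (ξ i ω) ≠ 1} with hA
  have hmemA : ∀ ν ω, ω ∈ A ν ↔
      ∀ k, 1 ≤ k → k ≤ Kf ν → ∃ i, i < ν ∧ bitk k (ξ i ω) ≠ 1 := by
    intro ν ω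
    simp only [hA, Set.mem_iInter, Set.mem_iUnion, Set.mem_Icc, Set.mem_Iio,
      Set.mem_setOf_eq, and_imp, exists_prop]
  -- measurability of bitk compositions
  have hbm : ∀ k i, Measurable fun ω => bitk k (ξ i ω) := by
    intro k i
    have hfl : ∀ c : ℝ, Measurable fun x : ℝ => ⌊c * x⌋ :=
      fun c => Int.measurable_floor.comp (measurable_const.mul measurable_id)
    exact (((hfl (2^k)).comp (hmeas i)).sub
      (((hfl (2^(k-1))).comp (hmeas i)).const_mul 2))
  have hAm : ∀ ν, MeasurableSet (A ν) := by
    intro ν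
    apply MeasurableSet.biInter (Set.to_countable _)
    intro k _
    apply MeasurableSet.biUnion (Set.to_countable _)
    intro i _
    exact ((hbm k i) (measurableSet_singleton 1)).compl
  -- the key probability bound
  have hbound : ∀ ν, 1 ≤ ν → P (A ν) ≤ ENNReal.ofReal ((((ν:ℝ)+1)⁻¹)^2) := by
    intro ν hν
    set K := Kf ν with hK
    have hνR : (1:ℝ) ≤ (ν:ℝ) := by exact_mod_cast hν
    have hlogpos : 0 < Real.log ((ν:ℝ)+1) := Real.log_pos (by linarith)
    have hrpos : 0 < (2:ℝ)^(ν+1) * Real.log ((ν:ℝ)+1) := by positivity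
    have hKreal : (2:ℝ)^(ν+1) * Real.log ((ν:ℝ)+1) ≤ (K:ℝ) := by
      have h1 : (0:ℤ) ≤ ⌈(2:ℝ)^(ν+1) * Real.log ((ν:ℝ)+1)⌉ := le_of_lt (Int.ceil_pos.mpr hrpos)
      have h2 : ((K:ℕ):ℤ) = ⌈(2:ℝ)^(ν+1) * Real.log ((ν:ℝ)+1)⌉ := by
        simp only [hK, hKf]
        exact Int.toNat_of_nonneg h1
      calc (2:ℝ)^(ν+1) * Real.log ((ν:ℝ)+1)
          ≤ (⌈(2:ℝ)^(ν+1) * Real.log ((ν:ℝ)+1)⌉ : ℝ) := Int.le_ceil _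
        _ = (K:ℝ) := by exact_mod_cast h2.symm
    -- the bad (null) set
    set Bad : Set Ω := ⋃ i ∈ Set.Iio ν, ξ i ⁻¹' (Set.Ico (0:ℝ) 1)ᶜ with hBadDef
    have hBad0 : P Bad = 0 := by
      rw [hBadDef, measure_biUnion_null_iff (Set.to_countable _)]
      intro i _
      have hms : MeasurableSet ((Set.Ico (0:ℝ) 1)ᶜ) := measurableSet_Ico.compl
      rw [← Measure.map_apply (hmeas i) hms, hunif i, Measure.restrict_apply hms]
      have hset : (Set.Ico (0:ℝ) 1)ᶜ ∩ Set.Icc 0 1 = {1} := by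
        ext x
        simp only [Set.mem_inter_iff, Set.mem_compl_iff, Set.mem_Ico, Set.mem_Icc,
          Set.mem_singleton_iff, not_and, not_lt]
        constructor
        · rintro ⟨h1, h2, h3⟩; exact le_antisymm h3 (h1 h2)
        · rintro rfl; norm_num
      rw [hset]
      exact measure_singleton 1
    -- indexing objects
    let F := {f : Fin ν → Fin (2^K) // ∀ j < K, ∃ i, ((f i : ℕ).testBit j = false)}
    let fext : (Fin ν → Fin (2^K)) → ℕ → ℕ := fun f i => if h : i < ν then (f ⟨i, h⟩ : ℕ) else 0
    let Ef : (Fin ν → Fin (2^K)) → Set Ω :=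
      fun f => ⋂ i ∈ Finset.range ν, ξ i ⁻¹' bset K (fext f i)
    -- inclusion
    have hincl : A ν ⊆ Bad ∪ ⋃ f : F, Ef f.1 := by
      intro ω hω
      by_cases hbad : ω ∈ Bad
      · exact Or.inl hbad
      right
      have hgood : ∀ i, i < ν → ξ i ω ∈ Set.Ico (0:ℝ) 1 := by
        intro i hi
        by_contra hcon
        exact hbad (Set.mem_biUnion (Set.mem_Iio.mpr hi) hcon)
      have hglt : ∀ i, i < ν → (⌊(2:ℝ)^K * ξ i ω⌋).toNat < 2^K := by
        intro i hi
        have h01 := hgood i hi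
        have hlt : ⌊(2:ℝ)^K * ξ i ω⌋ < ((2^K : ℕ) : ℤ) := by
          rw [Int.floor_lt]
          push_cast
          nlinarith [h01.2, (by positivity : (0:ℝ) < (2:ℝ)^K)]
        exact (Int.toNat_lt' (by positivity)).mpr hlt
      let g : Fin ν → Fin (2^K) := fun i => ⟨(⌊(2:ℝ)^K * ξ i ω⌋).toNat, hglt i i.2⟩
      have hgF : ∀ j < K, ∃ i : Fin ν, ((g i : ℕ).testBit j = false) := by
        intro j hj
        rw [hmemA] at hω
        obtain ⟨i, hi, hbit⟩ := hω (K - j) (by omega) (by omega)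
        refine ⟨⟨i, hi⟩, ?_⟩
        have h0 : 0 ≤ ξ i ω := (hgood i hi).1
        have hiff := bitk_testBit (ξ i ω) h0 (K - j) K (by omega) (by omega)
        have hKj : K - (K - j) = j := by omega
        rcases Bool.eq_false_or_eq_true (((g ⟨i, hi⟩ : ℕ)).testBit j) with h | h
        · exfalso
          apply hbit
          rw [hiff, hKj]
          exact h
        · exact h
      refine Set.mem_iUnion.mpr ⟨⟨g, hgF⟩, ?_⟩
      simp only [Ef, Set.mem_iInter]
      intro i hi
      rw [Finset.mem_range] at hi
      simp only [Set.mem_preimage, bset, Set.mem_setOf_eq, fext, dif_pos hi]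
      have h0 : 0 ≤ (2:ℝ)^K * ξ i ω := mul_nonneg (by positivity) (hgood i hi).1
      exact (Int.toNat_of_nonneg (Int.floor_nonneg.mpr h0)).symm
    -- measure of each elementary event
    have hEf : ∀ f : F, P (Ef f.1) = (ENNReal.ofReal (((2:ℝ)^K)⁻¹))^ν := by
      intro f
      have hprod := hindep.measure_inter_preimage_eq_mul (S := Finset.range ν)
        (sets := fun i => bset K (fext f.1 i)) (fun i _ => bset_meas K _)
      have hfac : ∀ i ∈ Finset.range ν,
          P (ξ i ⁻¹' bset K (fext f.1 i)) = ENNReal.ofReal (((2:ℝ)^K)⁻¹) := by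
        intro i hi
        rw [Finset.mem_range] at hi
        have hmlt : fext f.1 i < 2^K := by
          simp only [fext, dif_pos hi]
          exact (f.1 ⟨i, hi⟩).2
        rw [← Measure.map_apply (hmeas i) (bset_meas K _), hunif i, vol_bset K _ hmlt]
      calc P (Ef f.1) = ∏ i ∈ Finset.range ν, P (ξ i ⁻¹' bset K (fext f.1 i)) := hprod
        _ = ∏ _i ∈ Finset.range ν, ENNReal.ofReal (((2:ℝ)^K)⁻¹) :=
            Finset.prod_congr rfl hfac
        _ = (ENNReal.ofReal (((2:ℝ)^K)⁻¹))^ν := by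
            rw [Finset.prod_const, Finset.card_range]
    -- put everything together
    have hcard : (Fintype.card F : ENNReal) ≤ (((2^ν - 1)^K : ℕ) : ENNReal) := by
      exact_mod_cast (card_F ν K)
    have hr0 : (0:ℝ) ≤ ((2:ℝ)^K)⁻¹ := by positivity
    calc P (A ν) ≤ P (Bad ∪ ⋃ f : F, Ef f.1) := measure_mono hincl
      _ ≤ P Bad + P (⋃ f : F, Ef f.1) := measure_union_le _ _
      _ = P (⋃ f : F, Ef f.1) := by rw [hBad0, zero_add]
      _ ≤ ∑' f : F, P (Ef f.1) := by exact measure_iUnion_le _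
      _ = Finset.univ.sum (fun f : F => P (Ef f.1)) := tsum_fintype _
      _ = (Fintype.card F : ENNReal) * (ENNReal.ofReal (((2:ℝ)^K)⁻¹))^ν := by
          rw [Finset.sum_congr rfl (fun f _ => hEf f), Finset.sum_const, Finset.card_univ,
            nsmul_eq_mul]
      _ ≤ (((2^ν - 1)^K : ℕ) : ENNReal) * (ENNReal.ofReal (((2:ℝ)^K)⁻¹))^ν :=
          mul_le_mul_left hcard _
      _ = ENNReal.ofReal (((2^ν - 1 : ℕ):ℝ)^K * (((2:ℝ)^K)⁻¹)^ν) := by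
          rw [ENNReal.ofReal_mul (by positivity), ← ENNReal.ofReal_pow hr0]
          congr 1
          rw [← ENNReal.ofReal_natCast]
          congr 1
          push_cast
          ring
      _ ≤ ENNReal.ofReal ((((ν:ℝ)+1)⁻¹)^2) :=
          ENNReal.ofReal_le_ofReal (analytic ν K hν hKreal)
  -- summability
  have hsum : ∑' ν, P (A ν) ≠ ⊤ := by
    have hb : ∀ ν, P (A ν) ≤ ENNReal.ofReal ((((ν:ℝ)+1)⁻¹)^2) := by
      intro ν
      rcases Nat.eq_zero_or_pos ν with h | h
      · subst h
        norm_num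
        exact prob_le_one
      · exact hbound ν h
    have hsummable : Summable (fun ν : ℕ => (((ν:ℝ)+1)⁻¹)^2) := by
      have h1 : Summable (fun n : ℕ => 1 / (n:ℝ)^2) :=
        Real.summable_one_div_nat_pow.mpr (by norm_num)
      have h2 := (summable_nat_add_iff 1).mpr h1
      apply h2.congr
      intro n
      push_cast
      rw [one_div, inv_pow]
    have : ∑' ν, P (A ν) ≤ ENNReal.ofReal (∑' ν : ℕ, (((ν:ℝ)+1)⁻¹)^2) := by
      rw [ENNReal.ofReal_tsum_of_nonneg (fun n => by positivity) hsummable]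
      exact ENNReal.tsum_le_tsum hb
    exact ne_top_of_le_ne_top ENNReal.ofReal_ne_top this
  -- Borel-Cantelli
  have hBC : P (Filter.limsup A Filter.atTop) = 0 := measure_limsup_atTop_eq_zero hsum
  refine ⟨(Filter.limsup A Filter.atTop)ᶜ, (MeasurableSet.measurableSet_limsup hAm).compl, ?_, ?_⟩
  · rw [prob_compl_eq_one_sub (MeasurableSet.measurableSet_limsup hAm), hBC]; simp
  · intro ω hω
    rw [Set.mem_compl_iff, Filter.limsup_eq_iInf_iSup_of_nat] at hω
    simp only [Set.iInf_eq_iInter, Set.iSup_eq_iUnion, Set.mem_iInter, Set.mem_iUnion,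
      not_forall, not_exists] at hω
    obtain ⟨n, hn⟩ := hω
    refine ⟨max n 1, fun ν hν => ?_⟩
    have hν1 : 1 ≤ ν := le_trans (le_max_right n 1) hν
    have hνn : n ≤ ν := le_trans (le_max_left n 1) hν
    have hna := hn ν hνn
    rw [hmemA] at hna
    push_neg at hna
    obtain ⟨k, hk1, hk2, hk3⟩ := hna
    refine ⟨k, hk1, ?_, fun i hi => by
      have := hk3 i hi; exact not_not.mp (by simpa using this)⟩
    -- (k:ℤ) ≤ ⌈...⌉
    have h1 : ((Kf ν : ℕ) : ℤ) = max (⌈(2:ℝ)^(ν+1) * Real.log ((ν:ℝ)+1)⌉) 0 := by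
      simp [hKf]
    have h2 : (k:ℤ) ≤ ((Kf ν : ℕ) : ℤ) := by exact_mod_cast hk2
    have h3 : (1:ℤ) ≤ (k:ℤ) := by exact_mod_cast hk1
    rw [h1] at h2
    rcases max_cases (⌈(2:ℝ)^(ν+1) * Real.log ((ν:ℝ)+1)⌉) 0 with ⟨he, _⟩ | ⟨he, hlt⟩
    · rw [he] at h2; exact h2
    · rw [he] at h2; omega
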